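/- Let G be a finite p-group and k a field of characteristic p > 0. Let 0 → K → F → M → 0 be a short exact sequence of finite-dimensional kG-modules in which F is a finitely generated free kG-module. Then M admits good permutation resolutions if and only if K admits good permutation resolutions. -/

import Mathlib

open CategoryTheory

def IsPermutationModule (k G : Type) [Field k] [Group G]
    (P : Type) [AddCommGroup P] [Module (MonoidAlgebra k G) P] : Prop :=
  ∃ (X : Type) (_ : Fintype X) (m : MulAction G X),
    Nonempty (P ≃ₗ[MonoidAlgebra k G] (@Representation.ofMulAction k _ G _ X m).asModule)

def HasPermResFreeUpTo (k G : Type) [Field k] [Group G] (m : ℕ)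
    (M : Type) [AddCommGroup M] [Module (MonoidAlgebra k G) M] : Prop :=
  ∃ (n : ℕ) (P : ℕ → ModuleCat (MonoidAlgebra k G))
    (d : ∀ i, P (i + 1) ⟶ P i) (ε : P 0 ⟶ ModuleCat.of (MonoidAlgebra k G) M),
    (∀ i, IsPermutationModule k G (P i)) ∧
    (∀ i ≤ m, Module.Free (MonoidAlgebra k G) (P i)) ∧
    (∀ i, n < i → Subsingleton (P i)) ∧
    Function.Surjective ε ∧
    Function.Exact (d 0) ε ∧
    ∀ i, Function.Exact (d (i + 1)) (d i)

def HasFinitePermRes (k G : Type) [Field k] [Group G]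
    (M : Type) [AddCommGroup M] [Module (MonoidAlgebra k G) M] : Prop :=
  ∃ (n : ℕ) (P : ℕ → ModuleCat (MonoidAlgebra k G))
    (d : ∀ i, P (i + 1) ⟶ P i) (ε : P 0 ⟶ ModuleCat.of (MonoidAlgebra k G) M),
    (∀ i, IsPermutationModule k G (P i)) ∧
    (∀ i, n < i → Subsingleton (P i)) ∧
    Function.Surjective ε ∧
    Function.Exact (d 0) ε ∧
    ∀ i, Function.Exact (d (i + 1)) (d i)

def HasGoodPermRes (k G : Type) [Field k] [Group G]
    (M : Type) [AddCommGroup M] [Module (MonoidAlgebra k G) M] : Prop :=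
  ∀ m : ℕ, HasPermResFreeUpTo k G m M

/-!
A permutation resolution `P_• → M` free up to degree `m + 1` restricts to one of
`Ω = ker (P₀ → M)` free up to degree `m`, and Schanuel's lemma for `F ↠ M` and `P₀ ↠ M` gives
`K × P₀ ≅ Ω × F`. A free permutation module can be added in degree `0` of a resolution, which
resolves `Ω × F`, and split off again: for `Q₀ ↠ K × P₀` the kernel of `Q₀ → K` is
`ker (Q₀ → K × P₀) × P₀` because `P₀` is projective, so `Q₀` over a resolution of that kernel
resolves `K`. Conversely, splicing a resolution of `K` with `0 → K → F → M → 0` resolves `M`;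
`F ≅ kGⁿ` is the permutation module of `n` disjoint copies of the regular `G`-set.
-/

open scoped MonoidAlgebra

namespace Representation

variable {k G V W : Type*} [CommRing k] [Group G] [AddCommGroup V] [Module k V]
  [AddCommGroup W] [Module k W] {ρ : Representation k G V} {σ : Representation k G W}

noncomputable def Equiv.asModuleEquiv (φ : ρ.Equiv σ) : ρ.asModule ≃ₗ[k[G]] σ.asModule :=
  LinearEquiv.ofLinearMap (IntertwiningMap.equivLinearMapAsModule ρ σ φ.toIntertwiningMap)
    (IntertwiningMap.equivLinearMapAsModule σ ρ φ.symm.toIntertwiningMap)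
    (LinearMap.ext φ.apply_symm_apply) (LinearMap.ext φ.symm_apply_apply)

variable (ρ σ) in
noncomputable def prodAsModuleEquiv : (ρ.prod σ).asModule ≃ₗ[k[G]] ρ.asModule × σ.asModule :=
  LinearEquiv.ofLinearMap
    ((IntertwiningMap.equivLinearMapAsModule _ _ (IntertwiningMap.fst k ρ σ)).prod
      (IntertwiningMap.equivLinearMapAsModule _ _ (IntertwiningMap.snd k ρ σ)))
    ((IntertwiningMap.equivLinearMapAsModule _ _ (IntertwiningMap.inl k ρ σ)).coprod
      (IntertwiningMap.equivLinearMapAsModule _ _ (IntertwiningMap.inr k ρ σ)))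
    (by ext x <;> simp [IntertwiningMap.equivLinearMapAsModule] <;> rfl)
    (by ext x; exact Prod.ext (add_zero x.1) (zero_add x.2))

variable (k G) in
noncomputable def ofMulActionSumEquiv (X Y : Type*) [MulAction G X] [MulAction G Y] :
    (ofMulAction k G (X ⊕ Y)).Equiv ((ofMulAction k G X).prod (ofMulAction k G Y)) :=
  .mk ((MonoidAlgebra.coeffLinearEquiv k).trans ((Finsupp.sumFinsuppLEquivProdFinsupp k).trans
    ((MonoidAlgebra.coeffLinearEquiv k).symm.prodCongr (MonoidAlgebra.coeffLinearEquiv k).symm)))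
    (fun g => by ext (x | y) : 2 <;> simp)

end Representation

namespace IsPermutationModule

variable {k G : Type} [Field k] [Group G] {A B : Type} [AddCommGroup A] [Module k[G] A]
  [AddCommGroup B] [Module k[G] B]

theorem of_linearEquiv (h : IsPermutationModule k G A) (e : A ≃ₗ[k[G]] B) :
    IsPermutationModule k G B :=
  let ⟨X, hX, _, ⟨u⟩⟩ := h
  ⟨X, hX, _, ⟨e.symm.trans u⟩⟩

theorem of_subsingleton [Subsingleton A] : IsPermutationModule k G A := by
  let : MulAction G Empty := { smul _ := id, one_smul _ := rfl, mul_smul _ _ _ := rfl }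
  have : Subsingleton (Representation.ofMulAction k G Empty).asModule :=
    ⟨fun _ _ => MonoidAlgebra.ext (Subsingleton.elim (α := Empty →₀ k) _ _)⟩
  exact ⟨Empty, inferInstance, inferInstance, ⟨.ofSubsingleton _ _⟩⟩

theorem prod (hA : IsPermutationModule k G A) (hB : IsPermutationModule k G B) :
    IsPermutationModule k G (A × B) :=
  let ⟨X, _, _, ⟨u⟩⟩ := hA
  let ⟨Y, _, _, ⟨v⟩⟩ := hB
  ⟨X ⊕ Y, inferInstance, inferInstance, ⟨(u.prodCongr v).trans
    ((Representation.prodAsModuleEquiv _ _).symm.trans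
      (Representation.ofMulActionSumEquiv k G X Y).symm.asModuleEquiv)⟩⟩

variable [Finite G]

theorem monoidAlgebra : IsPermutationModule k G k[G] :=
  ⟨G, Fintype.ofFinite G, inferInstance, ⟨Representation.ofMulActionSelfAsModuleEquiv.symm⟩⟩

theorem fin_pi (n : ℕ) : IsPermutationModule k G (Fin n → k[G]) := by
  induction n with
  | zero => exact of_subsingleton
  | succ n ih =>
    exact (monoidAlgebra.prod ih).of_linearEquiv (Fin.consLinearEquiv k[G] fun _ => k[G])

theorem of_free [Module.Free k[G] A] [Module.Finite k[G] A] : IsPermutationModule k G A :=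
  (fin_pi _).of_linearEquiv ((Module.Free.chooseBasis k[G] A).equivFun.trans
    (LinearEquiv.funCongrLeft _ _ (Fintype.equivFin _).symm)).symm

end IsPermutationModule

section Schanuel

variable {R : Type*} [Ring R] {K F M K' P : Type*} [AddCommGroup K] [Module R K]
  [AddCommGroup F] [Module R F] [AddCommGroup M] [Module R M] [AddCommGroup K'] [Module R K']
  [AddCommGroup P] [Module R P]

theorem Function.Exact.nonempty_linearEquiv_prod [Module.Projective R P] {f : K →ₗ[R] F}
    {g : F →ₗ[R] P} (hfg : Function.Exact f g) (hf : Function.Injective f)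
    (hg : Function.Surjective g) : Nonempty (F ≃ₗ[R] K × P) :=
  let ⟨l, hl⟩ := Module.projective_lifting_property g .id hg
  ⟨(hfg.splitSurjectiveEquiv hf ⟨l, hl⟩).1⟩

def LinearMap.pullback (g : F →ₗ[R] M) (ε : P →ₗ[R] M) : Submodule R (F × P) :=
  LinearMap.ker (g ∘ₗ .fst R F P - ε ∘ₗ .snd R F P)

@[simp]
theorem LinearMap.mem_pullback {g : F →ₗ[R] M} {ε : P →ₗ[R] M} {x : F × P} :
    x ∈ g.pullback ε ↔ g x.1 = ε x.2 := by
  simp [LinearMap.pullback, sub_eq_zero]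

theorem LinearMap.map_prodComm_pullback (g : F →ₗ[R] M) (ε : P →ₗ[R] M) :
    (g.pullback ε).map (LinearEquiv.prodComm R F P).toLinearMap = ε.pullback g := by
  ext
  simp [Submodule.map_equiv_eq_comap_symm, eq_comm]

theorem Function.Exact.nonempty_pullback_linearEquiv_prod [Module.Projective R P]
    {f : K →ₗ[R] F} {g : F →ₗ[R] M} (hfg : Function.Exact f g) (hf : Function.Injective f)
    (hg : Function.Surjective g) (ε : P →ₗ[R] M) : Nonempty (g.pullback ε ≃ₗ[R] K × P) := by
  let ι : K →ₗ[R] g.pullback ε := (LinearMap.inl R F P ∘ₗ f).codRestrict _ fun a => by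
    simp [hfg.apply_apply_eq_zero]
  refine Function.Exact.nonempty_linearEquiv_prod (f := ι)
    (g := .snd R F P ∘ₗ (g.pullback ε).subtype) ?_ ?_ fun b => ?_
  · rintro ⟨⟨a, b⟩, hab⟩
    refine ⟨fun (hb : b = 0) => ?_, fun ⟨c, hc⟩ => hc ▸ rfl⟩
    obtain ⟨c, rfl⟩ := (hfg a).1 ((LinearMap.mem_pullback.1 hab).trans (by rw [hb, map_zero]))
    exact ⟨c, Subtype.ext (Prod.ext rfl hb.symm)⟩
  · exact fun x y h => hf (congrArg (fun z : g.pullback ε => z.1.1) h)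
  · obtain ⟨a, ha⟩ := hg (ε b)
    exact ⟨⟨(a, b), LinearMap.mem_pullback.2 ha⟩, rfl⟩

theorem schanuel [Module.Projective R F] [Module.Projective R P]
    {f : K →ₗ[R] F} {g : F →ₗ[R] M} (hf : Function.Injective f) (hg : Function.Surjective g)
    (hfg : Function.Exact f g) {f' : K' →ₗ[R] P} {g' : P →ₗ[R] M}
    (hf' : Function.Injective f') (hg' : Function.Surjective g') (hfg' : Function.Exact f' g') :
    Nonempty ((K × P) ≃ₗ[R] (K' × F)) :=
  let ⟨e⟩ := hfg.nonempty_pullback_linearEquiv_prod hf hg g'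
  let ⟨e'⟩ := hfg'.nonempty_pullback_linearEquiv_prod hf' hg' g
  ⟨e.symm.trans ((LinearEquiv.ofSubmodules _ _ _ (g.map_prodComm_pullback g')).trans e')⟩

theorem nonempty_ker_fst_comp_linearEquiv_prod {A B : Type*} [AddCommGroup A] [Module R A]
    [AddCommGroup B] [Module R B] [Module.Projective R B] {ε : P →ₗ[R] A × B}
    (hε : Function.Surjective ε) :
    Nonempty (LinearMap.ker (.fst R A B ∘ₗ ε) ≃ₗ[R] LinearMap.ker ε × B) := by
  have hle : LinearMap.ker ε ≤ LinearMap.ker (.fst R A B ∘ₗ ε) := fun x hx => by simp_all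
  refine Function.Exact.nonempty_linearEquiv_prod (f := Submodule.inclusion hle)
    (g := .snd R A B ∘ₗ ε ∘ₗ Submodule.subtype _) (fun ⟨x, hx⟩ => ?_)
    (Submodule.inclusion_injective hle) fun b => ?_
  · have hx : (ε x).1 = 0 := hx
    refine ⟨fun (h : (ε x).2 = 0) => ⟨⟨x, Prod.ext hx h⟩, rfl⟩, ?_⟩
    rintro ⟨⟨y, hy⟩, hyx⟩
    obtain rfl : y = x := congrArg Subtype.val hyx
    exact congrArg Prod.snd (LinearMap.mem_ker.1 hy)
  · obtain ⟨x, hx⟩ := hε (0, b)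
    exact ⟨⟨x, by simp [hx]⟩, by simp [hx]⟩

end Schanuel

namespace HasPermResFreeUpTo

variable {k G : Type} [Field k] [Group G] {m : ℕ} {A B M N : Type}
  [AddCommGroup A] [Module k[G] A] [AddCommGroup B] [Module k[G] B]
  [AddCommGroup M] [Module k[G] M] [AddCommGroup N] [Module k[G] N]

theorem mono (h : HasPermResFreeUpTo k G m M) {l : ℕ} (hlm : l ≤ m) :
    HasPermResFreeUpTo k G l M :=
  let ⟨n, P, d, ε, hP, hfree, hn, hε, h0, hd⟩ := h
  ⟨n, P, d, ε, hP, fun i hi => hfree i (hi.trans hlm), hn, hε, h0, hd⟩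

theorem of_linearEquiv (h : HasPermResFreeUpTo k G m M) (e : M ≃ₗ[k[G]] N) :
    HasPermResFreeUpTo k G m N :=
  let ⟨n, P, d, ε, hP, hfree, hn, hε, h0, hd⟩ := h
  ⟨n, P, d, ModuleCat.ofHom (e.toLinearMap ∘ₗ ε.hom), hP, hfree, hn, e.surjective.comp hε,
    LinearEquiv.postcomp_exact_iff_exact.2 h0, hd⟩

theorem exists_syzygy (h : HasPermResFreeUpTo k G (m + 1) M) :
    ∃ (P : ModuleCat k[G]) (ε : P →ₗ[k[G]] M), IsPermutationModule k G P ∧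
      Module.Free k[G] P ∧ Function.Surjective ε ∧
      HasPermResFreeUpTo k G m (LinearMap.ker ε) := by
  obtain ⟨n, P, d, ε, hP, hfree, hn, hε, h0, hd⟩ := h
  refine ⟨P 0, ε.hom, hP 0, hfree 0 m.succ.zero_le, hε, n, fun i => P (i + 1),
    fun i => d (i + 1), ModuleCat.ofHom ((d 0).hom.codRestrict _ h0.apply_apply_eq_zero),
    fun i => hP (i + 1), fun i hi => hfree (i + 1) (by omega),
    fun i hi => hn (i + 1) (by omega), fun ⟨y, hy⟩ => ?_, ?_, fun i => hd (i + 1)⟩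
  · obtain ⟨x, rfl⟩ := (h0 y).1 hy
    exact ⟨x, rfl⟩
  · rw [LinearMap.exact_iff]
    exact (LinearMap.ker_codRestrict _ _ _).trans (LinearMap.exact_iff.1 (hd 0))

theorem of_syzygy (h : HasPermResFreeUpTo k G m A) (f : A →ₗ[k[G]] B) (g : B →ₗ[k[G]] M)
    (hf : Function.Injective f) (hg : Function.Surjective g) (hfg : Function.Exact f g)
    (hB : IsPermutationModule k G B) [Module.Free k[G] B] :
    HasPermResFreeUpTo k G (m + 1) M := by
  obtain ⟨n, P, d, ε, hP, hfree, hn, hε, h0, hd⟩ := h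
  refine ⟨n + 1, fun | 0 => .of k[G] B | i + 1 => P i,
    fun | 0 => ModuleCat.ofHom (f ∘ₗ ε.hom) | i + 1 => d i, ModuleCat.ofHom g,
    fun | 0 => hB | i + 1 => hP i, fun | 0, _ => inferInstance | i + 1, hi => hfree i (by omega),
    fun | i + 1, hi => hn i (by omega), hg,
    (hε.comp_exact_iff_exact (f := f) (g := g)).2 hfg,
    fun | 0 => (hf.comp_exact_iff_exact (i := f)).2 h0 | i + 1 => hd i⟩

theorem prod (h : HasPermResFreeUpTo k G m A) (hB : IsPermutationModule k G B)
    [Module.Free k[G] B] : HasPermResFreeUpTo k G m (A × B) := by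
  obtain ⟨n, P, d, ε, hP, hfree, hn, hε, h0, hd⟩ := h
  refine ⟨n, fun | 0 => .of k[G] (P 0 × B) | i + 1 => P (i + 1),
    fun | 0 => ModuleCat.ofHom ((d 0).hom.prod 0) | i + 1 => d (i + 1),
    ModuleCat.ofHom (ε.hom.prodMap .id),
    fun | 0 => (hP 0).prod hB | i + 1 => hP (i + 1),
    fun | 0, _ => have := hfree 0 m.zero_le; inferInstance | i + 1, hi => hfree (i + 1) hi,
    fun | i + 1, hi => hn (i + 1) hi, hε.prodMap Function.surjective_id,
    fun ⟨x, b⟩ => ?_, fun | 0 => ?_ | i + 1 => hd (i + 1)⟩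
  · refine ⟨fun hxb => ?_, fun ⟨y, hy⟩ => hy ▸ Prod.ext (h0.apply_apply_eq_zero y) rfl⟩
    obtain ⟨y, rfl⟩ := (h0 x).1 (congrArg Prod.fst hxb)
    exact ⟨y, Prod.ext rfl (congrArg Prod.snd hxb).symm⟩
  · rw [LinearMap.exact_iff]
    refine (LinearMap.ker_prod _ _).trans ?_
    rw [LinearMap.ker_zero, inf_top_eq]
    exact LinearMap.exact_iff.1 (hd 0)

theorem of_prod (h : HasPermResFreeUpTo k G (m + 1) (A × B)) (hB : IsPermutationModule k G B)
    [Module.Free k[G] B] : HasPermResFreeUpTo k G (m + 1) A := by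
  obtain ⟨P, ε, hP, _, hε, hker⟩ := h.exists_syzygy
  obtain ⟨e⟩ := nonempty_ker_fst_comp_linearEquiv_prod hε
  exact ((hker.prod hB).of_linearEquiv e.symm).of_syzygy _ _ Subtype.val_injective
    (Prod.fst_surjective.comp hε) (LinearMap.exact_subtype_ker_map _) hP

end HasPermResFreeUpTo

theorem hasGoodPermRes_iff_of_free_cover_general
    (k : Type) [Field k]
    (G : Type) [Group G] [Finite G]
    (K F M : Type)
    [AddCommGroup K] [Module (MonoidAlgebra k G) K]
    [AddCommGroup F] [Module (MonoidAlgebra k G) F] [Module.Finite (MonoidAlgebra k G) F]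
    [Module.Free (MonoidAlgebra k G) F]
    [AddCommGroup M] [Module (MonoidAlgebra k G) M]
    (f : K →ₗ[MonoidAlgebra k G] F) (g : F →ₗ[MonoidAlgebra k G] M)
    (hf : Function.Injective f) (hg : Function.Surjective g)
    (hfg : Function.Exact f g) :
    HasGoodPermRes k G M ↔ HasGoodPermRes k G K := by
  have hF : IsPermutationModule k G F := .of_free
  refine ⟨fun hM m => ?_, fun hK m => ((hK m).of_syzygy f g hf hg hfg hF).mono m.le_succ⟩
  obtain ⟨P, ε, hP, _, hε, hker⟩ := (hM (m + 2)).exists_syzygy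
  have : Module.Projective k[G] P := .of_free
  obtain ⟨e⟩ := schanuel hf hg hfg Subtype.val_injective hε (LinearMap.exact_subtype_ker_map ε)
  exact (((hker.prod hF).of_linearEquiv e.symm).of_prod hP).mono m.le_succ

/-- Given a short exact sequence `0 → K → F → M → 0` of finite-dimensional `kG`-modules
with `F` finitely generated free, `M` admits good permutation resolutions if and only
if `K` does. -/
theorem hasGoodPermRes_iff_of_free_cover
    (p : ℕ) (hp : p.Prime) (k : Type) [Field k] [CharP k p]
    (G : Type) [Group G] [Finite G] (hG : IsPGroup p G)
    (K F M : Type)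
    [AddCommGroup K] [Module (MonoidAlgebra k G) K] [Module.Finite (MonoidAlgebra k G) K]
    [AddCommGroup F] [Module (MonoidAlgebra k G) F] [Module.Finite (MonoidAlgebra k G) F]
    [Module.Free (MonoidAlgebra k G) F]
    [AddCommGroup M] [Module (MonoidAlgebra k G) M] [Module.Finite (MonoidAlgebra k G) M]
    (f : K →ₗ[MonoidAlgebra k G] F) (g : F →ₗ[MonoidAlgebra k G] M)
    (hf : Function.Injective f) (hg : Function.Surjective g)
    (hfg : Function.Exact f g) :
    HasGoodPermRes k G M ↔ HasGoodPermRes k G K :=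
  hasGoodPermRes_iff_of_free_cover_general k G K F M f g hf hg hfg
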